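/- arXiv:1604.00733 — 2 statements merged into one kernel-verified Lean document; each statement's English description precedes it below -/
import Mathlib

section
/- Let 0 < ε, δ < 1 and let G be a graph with n vertices. Let 𝒫 be a partition of V(G) into k nonempty parts V₁, …, V_k, each of size at least n/(2k), and suppose 𝒫 is ε-regular for G. Let 𝒫' be a partition of V(G) into nonempty parts V₁', …, V_k' with |V_i Δ V_i'| ≤ δ·ε·n/k for each i. Then 𝒫' is (ε+8δ)-regular for G. -/
open Finset

variable {V : Type*} [Fintype V] [DecidableEq V]

/-- Number of ordered pairs `(x,y) ∈ X × Y` that are edges of `G`. -/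
def epairs (G : SimpleGraph V) [DecidableRel G.Adj] (X Y : Finset V) : ℕ :=
  ((X ×ˢ Y).filter fun p => G.Adj p.1 p.2).card

/-- Edge density between `X` and `Y`. -/
noncomputable def dens (G : SimpleGraph V) [DecidableRel G.Adj] (X Y : Finset V) : ℝ :=
  (epairs G X Y : ℝ) / ((X.card : ℝ) * (Y.card : ℝ))

/-- The pair `(X,Y)` is `ε`-regular. -/
def IsRegularPair (G : SimpleGraph V) [DecidableRel G.Adj] (ε : ℝ) (X Y : Finset V) : Prop :=
  ∀ ⦃X' : Finset V⦄, X' ⊆ X → ∀ ⦃Y' : Finset V⦄, Y' ⊆ Y →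
    ε * (X.card : ℝ) ≤ (X'.card : ℝ) → ε * (Y.card : ℝ) ≤ (Y'.card : ℝ) →
    |dens G X' Y' - dens G X Y| ≤ ε

open scoped Classical in
/-- A partition indexed by `Fin k` is `ε`-regular if all but at most `ε k²` ordered pairs
of parts are `ε`-regular pairs. -/
noncomputable def IsRegularPartition (G : SimpleGraph V) [DecidableRel G.Adj] (ε : ℝ)
    {k : ℕ} (P : Fin k → Finset V) : Prop :=
  (((univ : Finset (Fin k × Fin k)).filter fun p =>
      ¬ IsRegularPair G ε (P p.1) (P p.2)).card : ℝ) ≤ ε * (k : ℝ) ^ 2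


set_option linter.unusedSectionVars false
set_option linter.unusedVariables false

section AuxLemmas

lemma epairs_comm (G : SimpleGraph V) [DecidableRel G.Adj] (X Y : Finset V) :
    epairs G X Y = epairs G Y X := by
  rw [epairs, epairs, ← Finset.card_image_of_injective _ Prod.swap_injective]
  congr 1
  ext ⟨a, b⟩
  simp only [Finset.mem_image, Finset.mem_filter, Finset.mem_product, Prod.exists,
    Prod.swap_prod_mk, Prod.mk.injEq]
  constructor
  · rintro ⟨x, y, ⟨⟨hx, hy⟩, hadj⟩, rfl, rfl⟩
    exact ⟨⟨hy, hx⟩, hadj.symm⟩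
  · rintro ⟨⟨ha, hb⟩, hadj⟩
    exact ⟨b, a, ⟨⟨hb, ha⟩, hadj.symm⟩, rfl, rfl⟩

lemma epairs_le (G : SimpleGraph V) [DecidableRel G.Adj] (X Y : Finset V) :
    epairs G X Y ≤ X.card * Y.card := by
  rw [epairs, ← Finset.card_product]
  exact Finset.card_filter_le _ _

lemma epairs_mono_left (G : SimpleGraph V) [DecidableRel G.Adj] {X₀ X : Finset V} (Y : Finset V)
    (h : X₀ ⊆ X) : epairs G X₀ Y ≤ epairs G X Y :=
  Finset.card_le_card (Finset.filter_subset_filter _ (Finset.product_subset_product h (subset_refl _)))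

lemma epairs_split (G : SimpleGraph V) [DecidableRel G.Adj] {X₀ X : Finset V} (Y : Finset V)
    (h : X₀ ⊆ X) : epairs G X Y ≤ epairs G X₀ Y + (X \ X₀).card * Y.card := by
  have hunion : X₀ ∪ (X \ X₀) = X := Finset.union_sdiff_of_subset h
  have hdisj : Disjoint (X₀ ×ˢ Y) ((X \ X₀) ×ˢ Y) := by
    simp only [Finset.disjoint_left, Finset.mem_product, Finset.mem_sdiff]
    rintro ⟨a, b⟩ ⟨ha, hb⟩ ⟨⟨ha2, ha3⟩, _⟩
    exact ha3 ha
  have : epairs G X Y = epairs G X₀ Y + epairs G (X \ X₀) Y := by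
    rw [epairs, epairs, epairs, ← Finset.card_union_of_disjoint
      (Finset.disjoint_filter_filter hdisj), ← Finset.filter_union, ← Finset.union_product, hunion]
  rw [this]
  exact Nat.add_le_add_left (epairs_le G _ Y) _

lemma dens_comm (G : SimpleGraph V) [DecidableRel G.Adj] (X Y : Finset V) :
    dens G X Y = dens G Y X := by
  simp only [_root_.dens]; rw [epairs_comm, mul_comm]

lemma dens_nonneg (G : SimpleGraph V) [DecidableRel G.Adj] (X Y : Finset V) :
    0 ≤ dens G X Y := by
  simp only [_root_.dens]; positivity

lemma dens_le_one (G : SimpleGraph V) [DecidableRel G.Adj] (X Y : Finset V) :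
    dens G X Y ≤ 1 := by
  simp only [_root_.dens]
  apply div_le_one_of_le₀
  · exact_mod_cast epairs_le G X Y |>.trans_eq (by push_cast; ring) |>.trans_eq rfl
  · positivity

/-- Key density perturbation lemma (left coordinate). -/
lemma dens_left (G : SimpleGraph V) [DecidableRel G.Adj] {X₀ X Y : Finset V}
    (h : X₀ ⊆ X) (hX₀ : X₀.Nonempty) (hY : Y.Nonempty) :
    |dens G X Y - dens G X₀ Y| ≤ ((X.card : ℝ) - X₀.card) / X.card := by
  have hx₀ : (0:ℝ) < X₀.card := by exact_mod_cast Finset.card_pos.2 hX₀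
  have hxx : (X₀.card : ℝ) ≤ X.card := by exact_mod_cast Finset.card_le_card h
  have hx : (0:ℝ) < X.card := lt_of_lt_of_le hx₀ hxx
  have hy : (0:ℝ) < Y.card := by exact_mod_cast Finset.card_pos.2 hY
  have he₀e : (epairs G X₀ Y : ℝ) ≤ epairs G X Y := by
    exact_mod_cast epairs_mono_left G Y h
  have hee : (epairs G X Y : ℝ) ≤ epairs G X₀ Y + ((X.card : ℝ) - X₀.card) * Y.card := by
    have := epairs_split G Y h
    have hsd : ((X \ X₀).card : ℝ) = (X.card : ℝ) - X₀.card := by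
      rw [Finset.card_sdiff_of_subset h]
      push_cast [Nat.cast_sub (Finset.card_le_card h)]
      ring
    calc (epairs G X Y : ℝ) ≤ (epairs G X₀ Y : ℝ) + ((X \ X₀).card : ℝ) * Y.card := by
          exact_mod_cast this
      _ = epairs G X₀ Y + ((X.card : ℝ) - X₀.card) * Y.card := by rw [hsd]
  have he₀b : (epairs G X₀ Y : ℝ) ≤ X₀.card * Y.card := by exact_mod_cast epairs_le G X₀ Y
  simp only [_root_.dens]
  rw [abs_sub_le_iff]
  constructor
  · rw [div_sub_div _ _ (by positivity) (by positivity), div_le_div_iff₀ (by positivity) hx]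
    nlinarith [mul_pos hx₀ hy, mul_pos hx hy,
      mul_le_mul_of_nonneg_right hee (mul_nonneg (mul_nonneg hx₀.le hy.le) hx.le),
      mul_nonneg (Nat.cast_nonneg (epairs G X₀ Y) : (0:ℝ) ≤ _)
        (mul_nonneg (mul_nonneg hx.le hy.le) (sub_nonneg.2 hxx))]
  · rw [div_sub_div _ _ (by positivity) (by positivity), div_le_div_iff₀ (by positivity) hx]
    nlinarith [mul_pos hx₀ hy, mul_pos hx hy,
      mul_le_mul_of_nonneg_right he₀b (mul_nonneg (mul_nonneg hy.le hx.le) (sub_nonneg.2 hxx)),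
      mul_le_mul_of_nonneg_right he₀e (mul_nonneg (mul_nonneg hx₀.le hy.le) hx₀.le)]

lemma dens_right (G : SimpleGraph V) [DecidableRel G.Adj] {X Y₀ Y : Finset V}
    (h : Y₀ ⊆ Y) (hY₀ : Y₀.Nonempty) (hX : X.Nonempty) :
    |dens G X Y - dens G X Y₀| ≤ ((Y.card : ℝ) - Y₀.card) / Y.card := by
  rw [dens_comm G X Y, dens_comm G X Y₀]
  exact dens_left G h hY₀ hX

lemma coord_bound {ε δ x x' u v a a0 : ℝ} (hε0 : 0 < ε) (hδ0 : 0 < δ) (h1 : ε + 8*δ ≤ 1)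
    (hx : 0 < x) (hu : 0 ≤ u) (hv : 0 ≤ v) (huv : u + v ≤ 2*δ*ε*x)
    (hx' : x - u ≤ x') (ha : (ε + 8*δ)*x' ≤ a) (hva : a - a0 ≤ v) :
    (a - a0)/a + u/x + v/x' ≤ 4*δ := by
  have hε1 : ε ≤ 1 := by linarith
  have hδ8 : 8*δ ≤ 1 := by linarith
  have hε'0 : (0:ℝ) < ε + 8*δ := by linarith
  have h2de : 2*δ*ε ≤ 1/4 := by nlinarith
  have hw : (0:ℝ) < x - u := by nlinarith [mul_le_mul_of_nonneg_right h2de hx.le]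
  have hx'0 : (0:ℝ) < x' := lt_of_lt_of_le hw hx'
  have haw : (ε + 8*δ)*(x - u) ≤ a :=
    le_trans (mul_le_mul_of_nonneg_left hx' hε'0.le) ha
  have hap : (0:ℝ) < a := lt_of_lt_of_le (by positivity) haw
  have t1 : (a - a0)/a ≤ v/((ε + 8*δ)*(x - u)) :=
    div_le_div₀ hv hva (by positivity) haw
  have t3 : v/x' ≤ v/(x - u) := div_le_div₀ hv le_rfl hw hx'
  have main : v/((ε + 8*δ)*(x - u)) + u/x + v/(x - u) ≤ 4*δ := by
    set ε' := ε + 8*δ with hε'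
    have expand : v/(ε'*(x - u)) + u/x + v/(x - u)
        = (v*x + u*ε'*(x - u) + v*ε'*x)/(ε'*(x - u)*x) := by
      field_simp
    rw [expand, div_le_iff₀ (by positivity)]
    have hkey : ε*(1 + ε') ≤ 2*ε'*(1 - 2*δ*ε) := by
      rw [hε']
      nlinarith [mul_nonneg hδ0.le (sub_nonneg.2 hε1), mul_nonneg hε0.le (sub_nonneg.2 hε1),
        mul_nonneg (mul_nonneg hδ0.le hε0.le) (sub_nonneg.2 hδ8),
        mul_nonneg (mul_nonneg hδ0.le hδ0.le) hε0.le]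
    have hxu2 : (1 - 2*δ*ε)*x ≤ x - u := by nlinarith
    have s1 : 4*δ*ε'*((1 - 2*δ*ε)*x) ≤ 4*δ*ε'*(x - u) :=
      mul_le_mul_of_nonneg_left hxu2 (by positivity)
    have s2 : (ε*(1 + ε'))*(2*δ*x) ≤ (2*ε'*(1 - 2*δ*ε))*(2*δ*x) :=
      mul_le_mul_of_nonneg_right hkey (by positivity)
    have e1 : v*x + u*ε'*(x - u) + v*ε'*x ≤ (u + v)*(1 + ε')*x := by
      nlinarith [mul_nonneg hu hx.le, mul_nonneg (mul_nonneg hu hu) hε'0.le]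
    have e2 : (u + v)*(1 + ε')*x ≤ (2*δ*ε*x)*(1 + ε')*x := by
      have h0 : (0:ℝ) ≤ (1 + ε')*x := mul_nonneg (by positivity) hx.le
      calc (u + v)*(1 + ε')*x = (u + v)*((1 + ε')*x) := by ring
        _ ≤ (2*δ*ε*x)*((1 + ε')*x) := mul_le_mul_of_nonneg_right huv h0
        _ = (2*δ*ε*x)*(1 + ε')*x := by ring
    calc v*x + u*ε'*(x - u) + v*ε'*x ≤ (u + v)*(1 + ε')*x := e1
      _ ≤ (2*δ*ε*x)*(1 + ε')*x := e2
      _ = (ε*(1 + ε'))*(2*δ*x)*x := by ring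
      _ ≤ (2*ε'*(1 - 2*δ*ε))*(2*δ*x)*x := mul_le_mul_of_nonneg_right s2 hx.le
      _ = (4*δ*ε'*((1 - 2*δ*ε)*x))*x := by ring
      _ ≤ (4*δ*ε'*(x - u))*x := mul_le_mul_of_nonneg_right s1 hx.le
      _ = 4*δ*(ε'*(x - u)*x) := by ring
  linarith [t1, t3, main]

lemma card_symmDiff_eq (X X' : Finset V) :
    (symmDiff X X').card = (X \ X').card + (X' \ X).card := by
  rw [symmDiff_def, Finset.sup_eq_union]
  exact Finset.card_union_of_disjoint disjoint_sdiff_sdiff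

set_option maxHeartbeats 1600000 in
lemma pair_perturb (G : SimpleGraph V) [DecidableRel G.Adj] {ε δ : ℝ}
    (hε0 : 0 < ε) (hδ0 : 0 < δ) (h1 : ε + 8*δ ≤ 1)
    {X Y X' Y' : Finset V} (hX : X.Nonempty) (hY : Y.Nonempty)
    (hX' : X'.Nonempty) (hY' : Y'.Nonempty)
    (hdX : ((symmDiff X X').card : ℝ) ≤ 2*δ*ε*X.card)
    (hdY : ((symmDiff Y Y').card : ℝ) ≤ 2*δ*ε*Y.card)
    (hreg : IsRegularPair G ε X Y) :
    IsRegularPair G (ε + 8*δ) X' Y' := by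
  intro A hA B hB hAc hBc
  classical
  have hε'0 : (0:ℝ) < ε + 8*δ := by linarith
  have hxpos : (0:ℝ) < X.card := by exact_mod_cast Finset.card_pos.2 hX
  have hypos : (0:ℝ) < Y.card := by exact_mod_cast Finset.card_pos.2 hY
  have hx'pos : (0:ℝ) < X'.card := by exact_mod_cast Finset.card_pos.2 hX'
  have hy'pos : (0:ℝ) < Y'.card := by exact_mod_cast Finset.card_pos.2 hY'
  have hapos : (0:ℝ) < A.card := lt_of_lt_of_le (by positivity) hAc
  have hbpos : (0:ℝ) < B.card := lt_of_lt_of_le (by positivity) hBc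
  have hAne : A.Nonempty := Finset.card_pos.1 (by exact_mod_cast hapos)
  have hBne : B.Nonempty := Finset.card_pos.1 (by exact_mod_cast hbpos)
  have hu0 : (0:ℝ) ≤ ((X \ X').card : ℝ) := by positivity
  have hv0 : (0:ℝ) ≤ ((X' \ X).card : ℝ) := by positivity
  have hu20 : (0:ℝ) ≤ ((Y \ Y').card : ℝ) := by positivity
  have hv20 : (0:ℝ) ≤ ((Y' \ Y).card : ℝ) := by positivity
  have hsymmX : ((X \ X').card : ℝ) + ((X' \ X).card : ℝ) ≤ 2*δ*ε*X.card := by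
    rw [card_symmDiff_eq] at hdX; push_cast at hdX; linarith
  have hsymmY : ((Y \ Y').card : ℝ) + ((Y' \ Y).card : ℝ) ≤ 2*δ*ε*Y.card := by
    rw [card_symmDiff_eq] at hdY; push_cast at hdY; linarith
  have hs_eq : (((X ∩ X').card : ℝ)) + ((X \ X').card : ℝ) = X.card := by
    exact_mod_cast Finset.card_inter_add_card_sdiff X X'
  have hs_eq' : (((X ∩ X').card : ℝ)) + ((X' \ X).card : ℝ) = X'.card := by
    have h2 := Finset.card_inter_add_card_sdiff X' X
    rw [Finset.inter_comm] at h2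
    exact_mod_cast h2
  have ht_eq : (((Y ∩ Y').card : ℝ)) + ((Y \ Y').card : ℝ) = Y.card := by
    exact_mod_cast Finset.card_inter_add_card_sdiff Y Y'
  have ht_eq' : (((Y ∩ Y').card : ℝ)) + ((Y' \ Y).card : ℝ) = Y'.card := by
    have h2 := Finset.card_inter_add_card_sdiff Y' Y
    rw [Finset.inter_comm] at h2
    exact_mod_cast h2
  have hva : (A.card : ℝ) - ((A ∩ X).card : ℝ) ≤ ((X' \ X).card : ℝ) := by
    have h3 : (((A ∩ X).card : ℝ)) + ((A \ X).card : ℝ) = A.card := by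
      exact_mod_cast Finset.card_inter_add_card_sdiff A X
    have h4 : ((A \ X).card : ℝ) ≤ ((X' \ X).card : ℝ) := by
      exact_mod_cast Finset.card_le_card (Finset.sdiff_subset_sdiff hA (subset_refl _))
    linarith
  have hv2b : (B.card : ℝ) - ((B ∩ Y).card : ℝ) ≤ ((Y' \ Y).card : ℝ) := by
    have h3 : (((B ∩ Y).card : ℝ)) + ((B \ Y).card : ℝ) = B.card := by
      exact_mod_cast Finset.card_inter_add_card_sdiff B Y
    have h4 : ((B \ Y).card : ℝ) ≤ ((Y' \ Y).card : ℝ) := by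
      exact_mod_cast Finset.card_le_card (Finset.sdiff_subset_sdiff hB (subset_refl _))
    linarith
  have hε1 : ε ≤ 1 := by linarith
  have h2de : 2*δ*ε ≤ 1/4 := by
    nlinarith [mul_le_mul_of_nonneg_left hε1 (by positivity : (0:ℝ) ≤ 2*δ)]
  have hspos : (0:ℝ) < ((X ∩ X').card : ℝ) := by
    linarith [mul_le_mul_of_nonneg_right h2de hxpos.le, hs_eq, hsymmX, hv0, hxpos]
  have htpos : (0:ℝ) < ((Y ∩ Y').card : ℝ) := by
    linarith [mul_le_mul_of_nonneg_right h2de hypos.le, ht_eq, hsymmY, hv20, hypos]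
  have hSne : (X ∩ X').Nonempty := Finset.card_pos.1 (by exact_mod_cast hspos)
  have hTne : (Y ∩ Y').Nonempty := Finset.card_pos.1 (by exact_mod_cast htpos)
  have ha0 : ε * X.card ≤ ((A ∩ X).card : ℝ) := by
    have hx'ge : (X.card : ℝ) - (X \ X').card ≤ X'.card := by linarith
    have h5 := mul_le_mul_of_nonneg_left hx'ge hε'0.le
    linarith [h5, hAc, hva, mul_nonneg hu0 (sub_nonneg.2 h1), hsymmX, hu0, hv0,
      mul_nonneg (mul_nonneg hδ0.le hxpos.le) (show (0:ℝ) ≤ 4-ε by linarith)]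
  have hb0 : ε * Y.card ≤ ((B ∩ Y).card : ℝ) := by
    have hy'ge : (Y.card : ℝ) - (Y \ Y').card ≤ Y'.card := by linarith
    have h5 := mul_le_mul_of_nonneg_left hy'ge hε'0.le
    linarith [h5, hBc, hv2b, mul_nonneg hu20 (sub_nonneg.2 h1), hsymmY, hu20, hv20,
      mul_nonneg (mul_nonneg hδ0.le hypos.le) (show (0:ℝ) ≤ 4-ε by linarith)]
  have hA₀ne : (A ∩ X).Nonempty := Finset.card_pos.1
    (by exact_mod_cast lt_of_lt_of_le (by positivity : (0:ℝ) < ε*X.card) ha0)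
  have hB₀ne : (B ∩ Y).Nonempty := Finset.card_pos.1
    (by exact_mod_cast lt_of_lt_of_le (by positivity : (0:ℝ) < ε*Y.card) hb0)
  have g1 : |dens G A B - dens G (A ∩ X) B| ≤ ((A.card:ℝ) - (A ∩ X).card)/A.card :=
    dens_left G Finset.inter_subset_left hA₀ne hBne
  have g2 : |dens G (A ∩ X) B - dens G (A ∩ X) (B ∩ Y)| ≤ ((B.card:ℝ) - (B ∩ Y).card)/B.card :=
    dens_right G Finset.inter_subset_left hB₀ne hA₀ne
  have g3 : |dens G (A ∩ X) (B ∩ Y) - dens G X Y| ≤ ε :=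
    hreg Finset.inter_subset_right Finset.inter_subset_right ha0 hb0
  have g4 : |dens G X Y - dens G (X ∩ X') Y| ≤ ((X.card:ℝ) - (X ∩ X').card)/X.card :=
    dens_left G Finset.inter_subset_left hSne hY
  have g5 : |dens G (X ∩ X') Y - dens G (X ∩ X') (Y ∩ Y')| ≤ ((Y.card:ℝ) - (Y ∩ Y').card)/Y.card :=
    dens_right G Finset.inter_subset_left hTne hSne
  have g6 : |dens G (X ∩ X') (Y ∩ Y') - dens G X' (Y ∩ Y')| ≤ ((X'.card:ℝ) - (X ∩ X').card)/X'.card := by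
    rw [abs_sub_comm]
    exact dens_left G Finset.inter_subset_right hSne hTne
  have g7 : |dens G X' (Y ∩ Y') - dens G X' Y'| ≤ ((Y'.card:ℝ) - (Y ∩ Y').card)/Y'.card := by
    rw [abs_sub_comm]
    exact dens_right G (show Y ∩ Y' ⊆ Y' from Finset.inter_subset_right) hTne hX'
  have cb1 : ((A.card:ℝ) - (A ∩ X).card)/A.card + ((X \ X').card : ℝ)/X.card
      + ((X' \ X).card : ℝ)/X'.card ≤ 4*δ :=
    coord_bound hε0 hδ0 h1 hxpos hu0 hv0 hsymmX (by linarith) hAc hva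
  have cb2 : ((B.card:ℝ) - (B ∩ Y).card)/B.card + ((Y \ Y').card : ℝ)/Y.card
      + ((Y' \ Y).card : ℝ)/Y'.card ≤ 4*δ :=
    coord_bound hε0 hδ0 h1 hypos hu20 hv20 hsymmY (by linarith) hBc hv2b
  have T1 := abs_sub_le (dens G A B) (dens G (A ∩ X) B) (dens G X' Y')
  have T2 := abs_sub_le (dens G (A ∩ X) B) (dens G (A ∩ X) (B ∩ Y)) (dens G X' Y')
  have T3 := abs_sub_le (dens G (A ∩ X) (B ∩ Y)) (dens G X Y) (dens G X' Y')
  have T4 := abs_sub_le (dens G X Y) (dens G (X ∩ X') Y) (dens G X' Y')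
  have T5 := abs_sub_le (dens G (X ∩ X') Y) (dens G (X ∩ X') (Y ∩ Y')) (dens G X' Y')
  have T6 := abs_sub_le (dens G (X ∩ X') (Y ∩ Y')) (dens G X' (Y ∩ Y')) (dens G X' Y')
  have hxs : (X.card:ℝ) - (X ∩ X').card = (X \ X').card := by linarith
  have hx's : (X'.card:ℝ) - (X ∩ X').card = (X' \ X).card := by linarith
  have hyt : (Y.card:ℝ) - (Y ∩ Y').card = (Y \ Y').card := by linarith
  have hy't : (Y'.card:ℝ) - (Y ∩ Y').card = (Y' \ Y).card := by linarith
  rw [hxs] at g4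
  rw [hx's] at g6
  rw [hyt] at g5
  rw [hy't] at g7
  linarith [g1, g2, g3, g4, g5, g6, g7, T1, T2, T3, T4, T5, T6, cb1, cb2]

lemma isRegularPair_of_one_le (G : SimpleGraph V) [DecidableRel G.Adj] {c : ℝ}
    (h : 1 ≤ c) (X Y : Finset V) : IsRegularPair G c X Y := by
  intro A _ B _ _ _
  have h1 := dens_nonneg G A B
  have h2 := dens_le_one G A B
  have h3 := dens_nonneg G X Y
  have h4 := dens_le_one G X Y
  rw [abs_le]
  constructor <;> linarith


end AuxLemmas

/-- Perturbing each part of an `ε`-regular partition (with parts of size at least `n/(2k)`)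
by at most `δεn/k` vertices yields an `(ε+8δ)`-regular partition. -/
theorem regular_partition_perturbation (G : SimpleGraph V) [DecidableRel G.Adj]
    (ε δ : ℝ) (hε0 : 0 < ε) (hε1 : ε < 1) (hδ0 : 0 < δ) (hδ1 : δ < 1)
    (k : ℕ) (hk : 0 < k) (P P' : Fin k → Finset V)
    (hPne : ∀ i, (P i).Nonempty)
    (hPdisj : ∀ i j, i ≠ j → Disjoint (P i) (P j))
    (hPcover : (univ : Finset (Fin k)).biUnion P = (univ : Finset V))
    (hPsize : ∀ i, (Fintype.card V : ℝ) / (2 * k) ≤ ((P i).card : ℝ))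
    (hPreg : IsRegularPartition G ε P)
    (hP'ne : ∀ i, (P' i).Nonempty)
    (hP'disj : ∀ i j, i ≠ j → Disjoint (P' i) (P' j))
    (hP'cover : (univ : Finset (Fin k)).biUnion P' = (univ : Finset V))
    (hclose : ∀ i, ((symmDiff (P i) (P' i)).card : ℝ) ≤ δ * ε * (Fintype.card V : ℝ) / k) :
    IsRegularPartition G (ε + 8 * δ) P' := by
  classical
  have hk0 : (0:ℝ) < k := by exact_mod_cast hk
  by_cases hle : ε + 8 * δ ≤ 1
  · -- main case
    have hd : ∀ i, ((symmDiff (P i) (P' i)).card : ℝ) ≤ 2*δ*ε*(P i).card := by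
      intro i
      have heq : δ * ε * (Fintype.card V : ℝ) / k = (2*δ*ε) * ((Fintype.card V : ℝ) / (2*k)) := by
        field_simp
      calc ((symmDiff (P i) (P' i)).card : ℝ) ≤ δ * ε * (Fintype.card V : ℝ) / k := hclose i
        _ = (2*δ*ε) * ((Fintype.card V : ℝ) / (2*k)) := heq
        _ ≤ (2*δ*ε) * (P i).card := by
            apply mul_le_mul_of_nonneg_left (hPsize i) (by positivity)
        _ = 2*δ*ε*(P i).card := by ring
    unfold IsRegularPartition at hPreg ⊢
    have hsub : ((univ : Finset (Fin k × Fin k)).filter fun p =>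
          ¬ IsRegularPair G (ε + 8*δ) (P' p.1) (P' p.2)) ⊆
        ((univ : Finset (Fin k × Fin k)).filter fun p =>
          ¬ IsRegularPair G ε (P p.1) (P p.2)) := by
      intro p hp
      simp only [Finset.mem_filter, Finset.mem_univ, true_and] at hp ⊢
      intro hregp
      exact hp (pair_perturb G hε0 hδ0 hle (hPne p.1) (hPne p.2) (hP'ne p.1) (hP'ne p.2)
        (hd p.1) (hd p.2) hregp)
    calc ((((univ : Finset (Fin k × Fin k)).filter fun p =>
          ¬ IsRegularPair G (ε + 8*δ) (P' p.1) (P' p.2)).card : ℕ) : ℝ)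
        ≤ (((univ : Finset (Fin k × Fin k)).filter fun p =>
          ¬ IsRegularPair G ε (P p.1) (P p.2)).card : ℝ) := by
          exact_mod_cast Finset.card_le_card hsub
      _ ≤ ε * (k : ℝ)^2 := hPreg
      _ ≤ (ε + 8*δ) * (k : ℝ)^2 := by nlinarith [sq_nonneg (k:ℝ)]
  · push_neg at hle
    unfold IsRegularPartition
    have h0 : ((univ : Finset (Fin k × Fin k)).filter fun p =>
        ¬ IsRegularPair G (ε + 8*δ) (P' p.1) (P' p.2)) = ∅ := by
      apply Finset.filter_eq_empty_iff.mpr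
      intro p _
      exact not_not_intro (isRegularPair_of_one_le G hle.le _ _)
    rw [h0]
    simp only [Finset.card_empty, Nat.cast_zero]
    positivity
end

section
/- Let f : [0,1]² → [0,1] be a measurable function. For any intervals A, A', B, B' ⊆ [0,1] with λ(A), λ(B), λ(A'), λ(B') all positive, one has |d_f(A,B) − d_f(A',B')| ≤ 2·λ((A×B) Δ (A'×B'))/(λ(A)·λ(B)). -/
/-!
Write `I = ∫_S f`, `J = ∫_T f`, `s = λ(S)`, `t = λ(T)` for the boxes `S = A × B`, `T = A' × B'`.
Since `0 ≤ f ≤ 1`, both `|I - J|` and `|s - t|` are at most `λ(S Δ T)`, and the ratio `J / t`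
lies in `[0, 1]`. The identity `I/s - J/t = ((I - J) + (J/t)(t - s)) / s` then bounds the
difference of the two averages by `2 λ(S Δ T) / s`.
-/

open MeasureTheory

/-- Normalized integral density `d_f(A,B) = (∫_{A×B} f) / (λ(A) λ(B))`. -/
noncomputable def dBox (f : ℝ × ℝ → ℝ) (A B : Set ℝ) : ℝ :=
  (∫ p in A ×ˢ B, f p) / ((volume A).toReal * (volume B).toReal)

open Set
open scoped symmDiff ENNReal

theorem abs_div_sub_div_le {I J s t : ℝ} (hs : 0 < s) (hJ : 0 ≤ J) (hJt : J ≤ t) :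
    |I / s - J / t| ≤ (|I - J| + |s - t|) / s := by
  have ht : 0 ≤ t := hJ.trans hJt
  have hq1 : J / t ≤ 1 := div_le_one_of_le₀ hJt ht
  have hqt : J / t * t = J := by
    rcases ht.eq_or_lt with rfl | ht
    · simp [le_antisymm hJt hJ]
    · exact div_mul_cancel₀ J ht.ne'
  have hsplit : I / s - J / t = ((I - J) + J / t * (t - s)) / s := by
    rw [mul_sub, hqt]
    field_simp
    ring
  rw [hsplit, abs_div, abs_of_pos hs]
  gcongr
  calc |(I - J) + J / t * (t - s)| ≤ |I - J| + |J / t * (t - s)| := abs_add_le _ _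
    _ ≤ |I - J| + |s - t| := by
        rw [abs_mul, abs_of_nonneg (div_nonneg hJ ht), abs_sub_comm t s]
        gcongr
        exact mul_le_of_le_one_left (abs_nonneg _) hq1

section SetIntegral

variable {α : Type*} [MeasurableSpace α] {μ : Measure α} {S T : Set α}

theorem norm_setIntegral_sub_setIntegral_le {E : Type*} [NormedAddCommGroup E] [NormedSpace ℝ E]
    {f : α → E} {C : ℝ} (hS : MeasurableSet S) (hT : MeasurableSet T)
    (hSfin : μ S ≠ ∞) (hTfin : μ T ≠ ∞) (hfS : IntegrableOn f S μ) (hfT : IntegrableOn f T μ)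
    (hC : ∀ x, ‖f x‖ ≤ C) :
    ‖∫ x in S, f x ∂μ - ∫ x in T, f x ∂μ‖ ≤ C * μ.real (S ∆ T) := by
  have hsplit : ∫ x in S, f x ∂μ - ∫ x in T, f x ∂μ =
      ∫ x in S \ T, f x ∂μ - ∫ x in T \ S, f x ∂μ := by
    rw [← integral_inter_add_sdiff hT hfS, ← integral_inter_add_sdiff hS hfT, inter_comm T S]
    abel
  rw [hsplit, measureReal_symmDiff_eq hS hT hSfin hTfin, mul_add]
  calc _ ≤ ‖∫ x in S \ T, f x ∂μ‖ + ‖∫ x in T \ S, f x ∂μ‖ := norm_sub_le _ _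
    _ ≤ _ := add_le_add
        (norm_setIntegral_le_of_norm_le_const (measure_lt_top_of_subset sdiff_subset hSfin)
          fun x _ ↦ hC x)
        (norm_setIntegral_le_of_norm_le_const (measure_lt_top_of_subset sdiff_subset hTfin)
          fun x _ ↦ hC x)

theorem abs_setAverage_sub_setAverage_le {f : α → ℝ} (hS : MeasurableSet S) (hT : MeasurableSet T)
    (hSfin : μ S ≠ ∞) (hTfin : μ T ≠ ∞) (hS0 : μ S ≠ 0) (hfm : AEStronglyMeasurable f μ)
    (hf : ∀ x, f x ∈ Icc 0 1) :
    |⨍ x in S, f x ∂μ - ⨍ x in T, f x ∂μ| ≤ 2 * μ.real (S ∆ T) / μ.real S := by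
  have hnorm : ∀ x, ‖f x‖ ≤ 1 := fun x ↦ by
    rw [Real.norm_of_nonneg (hf x).1]
    exact (hf x).2
  have hint : ∀ U, μ U ≠ ∞ → IntegrableOn f U μ := fun U hU ↦
    Measure.integrableOn_of_bounded hU hfm (ae_of_all _ hnorm)
  have hJ : 0 ≤ ∫ x in T, f x ∂μ := setIntegral_nonneg hT fun x _ ↦ (hf x).1
  have hJT : ∫ x in T, f x ∂μ ≤ μ.real T := by
    simpa [Real.norm_of_nonneg hJ] using
      norm_setIntegral_le_of_norm_le_const hTfin.lt_top fun x _ ↦ hnorm x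
  have hIJ := norm_setIntegral_sub_setIntegral_le hS hT hSfin hTfin (hint S hSfin)
    (hint T hTfin) hnorm
  rw [Real.norm_eq_abs, one_mul] at hIJ
  have hst := abs_measureReal_sub_le_measureReal_symmDiff' hS.nullMeasurableSet
    hT.nullMeasurableSet hSfin hTfin
  rw [setAverage_eq, setAverage_eq, smul_eq_mul, smul_eq_mul, ← div_eq_inv_mul,
    ← div_eq_inv_mul]
  have hs : 0 < μ.real S := ENNReal.toReal_pos hS0 hSfin
  calc _ ≤ _ := abs_div_sub_div_le hs hJ hJT
    _ ≤ _ := div_le_div_of_nonneg_right (by linarith) hs.le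

end SetIntegral

theorem toReal_volume_prod {α β : Type*} [MeasureSpace α] [MeasureSpace β]
    [SigmaFinite (volume : Measure β)] (s : Set α) (t : Set β) :
    (volume (s ×ˢ t)).toReal = (volume s).toReal * (volume t).toReal := by
  rw [Measure.volume_eq_prod, Measure.prod_prod, ENNReal.toReal_mul]

theorem dBox_eq_setAverage (f : ℝ × ℝ → ℝ) (A B : Set ℝ) :
    dBox f A B = ⨍ p in A ×ˢ B, f p := by
  rw [dBox, setAverage_eq, smul_eq_mul, ← div_eq_inv_mul, measureReal_def, toReal_volume_prod]

theorem density_diff_of_box_symmDiff_general (f : ℝ × ℝ → ℝ) (hmeas : Measurable f)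
    (hf : ∀ p, f p ∈ Set.Icc (0 : ℝ) 1)
    (A A' B B' : Set ℝ)
    (hA : A.OrdConnected) (hA' : A'.OrdConnected)
    (hB : B.OrdConnected) (hB' : B'.OrdConnected)
    (hApos : 0 < (volume A).toReal) (hA'pos : 0 < (volume A').toReal)
    (hBpos : 0 < (volume B).toReal) (hB'pos : 0 < (volume B').toReal) :
    |dBox f A B - dBox f A' B'| ≤
      2 * (volume (symmDiff (A ×ˢ B) (A' ×ˢ B'))).toReal /
        ((volume A).toReal * (volume B).toReal) := by
  obtain ⟨hS0, hSfin⟩ := ENNReal.toReal_pos_iff.1 <|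
    (toReal_volume_prod A B).symm ▸ mul_pos hApos hBpos
  obtain ⟨-, hTfin⟩ := ENNReal.toReal_pos_iff.1 <|
    (toReal_volume_prod A' B').symm ▸ mul_pos hA'pos hB'pos
  rw [dBox_eq_setAverage, dBox_eq_setAverage, ← toReal_volume_prod]
  exact abs_setAverage_sub_setAverage_le (hA.measurableSet.prod hB.measurableSet)
    (hA'.measurableSet.prod hB'.measurableSet) hSfin.ne hTfin.ne hS0.ne'
    hmeas.aestronglyMeasurable hf

/-- `|d_f(A,B) - d_f(A',B')| ≤ 2 λ((A×B) Δ (A'×B')) / (λ(A) λ(B))` for intervals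
`A, A', B, B' ⊆ [0,1]` of positive measure. -/
theorem density_diff_of_box_symmDiff (f : ℝ × ℝ → ℝ) (hmeas : Measurable f)
    (hf : ∀ p, f p ∈ Set.Icc (0 : ℝ) 1)
    (A A' B B' : Set ℝ)
    (hA : A.OrdConnected) (hA' : A'.OrdConnected)
    (hB : B.OrdConnected) (hB' : B'.OrdConnected)
    (hAsub : A ⊆ Set.Icc 0 1) (hA'sub : A' ⊆ Set.Icc 0 1)
    (hBsub : B ⊆ Set.Icc 0 1) (hB'sub : B' ⊆ Set.Icc 0 1)
    (hApos : 0 < (volume A).toReal) (hA'pos : 0 < (volume A').toReal)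
    (hBpos : 0 < (volume B).toReal) (hB'pos : 0 < (volume B').toReal) :
    |dBox f A B - dBox f A' B'| ≤
      2 * (volume (symmDiff (A ×ˢ B) (A' ×ˢ B'))).toReal /
        ((volume A).toReal * (volume B).toReal) :=
  density_diff_of_box_symmDiff_general f hmeas hf A A' B B' hA hA' hB hB' hApos hA'pos hBpos hB'pos
end
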